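/- Let K be a field of characteristic zero, A a K-algebra (not necessarily unital or commutative), and δ a locally finite K-E-derivation of A. If e is an idempotent of A lying in both the kernel of δ and the image of δ, then both eA = {ea : a ∈ A} and Ae = {ae : a ∈ A} are contained in the image of δ. -/

import Mathlib

/-!
Write `φ = 1 - δ`, choose `b` with `δ b = e` and put `w = e b e`, so that `φ w = w - e`. On the
corner `eA` the operators `Ψ = φ` and `W = (w * ·)` then satisfy `Ψ (1 + W) = W Ψ`, hence
`Ψ q(1 + W) = q(W) Ψ` for every polynomial `q`. If `δ^m x = 0` for some `x ∈ eA`, induction on `m`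
gives `q(W) x ∈ im δ` for all `q`, because `(q(1 + W) - q(W)) x = δ (q(1 + W) x) - q(W) (δ x)` and,
in characteristic zero, every polynomial is of the form `q(1 + X) - q(X)` (Bernoulli polynomials).
An arbitrary element of `eA` reduces to this case by the Fitting decomposition of `δ` on the
finite-dimensional span of its `δ`-orbit. The case of `Ae` is the mirror image, with `W = (· * w)`.
-/

open Polynomial

theorem Polynomial.exists_comp_one_add_X_sub_eq {K : Type*} [Field K] [CharZero K] (q : K[X]) :
    ∃ p : K[X], p.comp (1 + X) - p = q := by
  induction q using Polynomial.induction_on' with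
  | add q r hq hr =>
    obtain ⟨p, rfl⟩ := hq
    obtain ⟨p', rfl⟩ := hr
    exact ⟨p + p', by rw [add_comp]; abel⟩
  | monomial k a =>
    set B := (bernoulli (k + 1)).map (algebraMap ℚ K)
    have hB : B.comp (1 + X) = B + C ((k : K) + 1) * X ^ k := by
      simpa [B, map_comp, C_add, C_1] using
        congrArg (map (algebraMap ℚ K)) (bernoulli_comp_one_add_X (k + 1))
    refine ⟨C (a / (k + 1)) * B, ?_⟩
    rw [mul_comp, C_comp, hB, ← mul_sub, add_sub_cancel_left, ← mul_assoc, ← C_mul,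
      div_mul_cancel₀ _ (Nat.cast_add_one_ne_zero k), C_mul_X_pow_eq_monomial]

theorem SemiconjBy.aeval {R A : Type*} [CommSemiring R] [Semiring A] [Algebra R A] {x a b : A}
    (h : SemiconjBy x a b) (p : R[X]) : SemiconjBy x (aeval a p) (aeval b p) := by
  induction p using Polynomial.induction_on' with
  | add p q hp hq => simpa only [map_add] using hp.add_right hq
  | monomial n r =>
    simp only [aeval_monomial]
    exact SemiconjBy.mul_right (Algebra.commute_algebraMap_right r x) (h.pow_right n)

section

variable {R M : Type*} [Ring R] [AddCommGroup M] [Module R M]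

theorem Module.End.exists_pow_apply_eq_zero_and_sub_mem_range [IsNoetherian R M] [IsArtinian R M]
    (D : Module.End R M) (x : M) :
    ∃ n : M, (∃ m : ℕ, (D ^ m) n = 0) ∧ x - n ∈ LinearMap.range D := by
  obtain ⟨d, hd⟩ := Filter.eventually_atTop.mp D.eventually_isCompl_ker_pow_range_pow
  obtain ⟨n, _, hn, ⟨s, rfl⟩, rfl⟩ :=
    Submodule.codisjoint_iff_exists_add_eq.mp (hd (d + 1) d.le_succ).codisjoint x
  refine ⟨n, ⟨d + 1, hn⟩, ?_⟩
  rw [add_sub_cancel_left, pow_succ', Module.End.mul_apply]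
  exact LinearMap.mem_range_self D _

theorem Module.End.apply_mem_span_range_pow_apply (D : Module.End R M) (x : M) {u : M}
    (hu : u ∈ Submodule.span R (Set.range fun i : ℕ => (D ^ i) x)) :
    D u ∈ Submodule.span R (Set.range fun i : ℕ => (D ^ i) x) := by
  refine Submodule.mem_comap.mp ((Submodule.span_le (p := Submodule.comap D _)).mpr ?_ hu)
  rintro _ ⟨i, rfl⟩
  exact Submodule.subset_span ⟨i + 1, by simp only [pow_succ', Module.End.mul_apply]⟩

theorem Module.End.exists_mem_span_pow_apply_eq_zero_and_sub_mem_range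
    (D : Module.End R M) (x : M)
    [IsNoetherian R (Submodule.span R (Set.range fun i : ℕ => (D ^ i) x))]
    [IsArtinian R (Submodule.span R (Set.range fun i : ℕ => (D ^ i) x))] :
    ∃ n ∈ Submodule.span R (Set.range fun i : ℕ => (D ^ i) x),
      (∃ m : ℕ, (D ^ m) n = 0) ∧ x - n ∈ LinearMap.range D := by
  set U := Submodule.span R (Set.range fun i : ℕ => (D ^ i) x)
  have hDU : ∀ u ∈ U, D u ∈ U := fun u => D.apply_mem_span_range_pow_apply x
  obtain ⟨n, ⟨m, hm⟩, ⟨s, hs⟩⟩ := Module.End.exists_pow_apply_eq_zero_and_sub_mem_range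
    (D.restrict hDU) ⟨x, Submodule.subset_span ⟨0, by simp⟩⟩
  refine ⟨n, n.2, ⟨m, ?_⟩, s, congrArg Subtype.val hs⟩
  rw [Module.End.pow_restrict] at hm
  exact congrArg Subtype.val hm

end

section

variable {K V : Type*} [Field K] [CharZero K] [AddCommGroup V] [Module K V]

theorem aeval_apply_mem_range_one_sub_of_pow_apply_eq_zero {Ψ W : Module.End K V}
    (h : Ψ * (1 + W) = W * Ψ) {m : ℕ} {x : V} (hx : ((1 - Ψ) ^ m) x = 0) (q : K[X]) :
    aeval W q x ∈ LinearMap.range (1 - Ψ) := by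
  induction m generalizing x q with
  | zero => simp_all
  | succ m ih =>
    obtain ⟨p, rfl⟩ := exists_comp_one_add_X_sub_eq q
    have hΨ : Ψ (aeval (1 + W) p x) = aeval W p (Ψ x) :=
      congrArg (· x) (SemiconjBy.aeval h p).eq
    have key : aeval W (p.comp (1 + X) - p) x
        = (1 - Ψ) (aeval (1 + W) p x) - aeval W p ((1 - Ψ) x) := by
      simp only [map_sub, aeval_comp, map_add, aeval_X, map_one, LinearMap.sub_apply,
        Module.End.one_apply, hΨ]
      abel
    rw [key]
    refine Submodule.sub_mem _ (LinearMap.mem_range_self _ _) (ih ?_ p)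
    rwa [← Module.End.mul_apply, ← pow_succ]


theorem mem_range_one_sub_of_finiteDimensional_span {Ψ W : Module.End K V} {F : Submodule K V}
    (hΨF : ∀ z ∈ F, Ψ z ∈ F) (hWF : ∀ z ∈ F, W z ∈ F) (h : ∀ z ∈ F, Ψ (z + W z) = W (Ψ z))
    {c : V} (hc : c ∈ F)
    (hfd : FiniteDimensional K (Submodule.span K (Set.range fun i : ℕ => ((1 - Ψ) ^ i) c))) :
    c ∈ LinearMap.range (1 - Ψ) := by
  set D : Module.End K V := 1 - Ψ
  have hDF : ∀ z ∈ F, D z ∈ F := fun z hz => F.sub_mem hz (hΨF z hz)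
  obtain ⟨n, hnU, ⟨m, hm⟩, hr⟩ := D.exists_mem_span_pow_apply_eq_zero_and_sub_mem_range c
  have hnF : n ∈ F := by
    refine (Submodule.span_le (p := F)).mpr ?_ hnU
    rintro _ ⟨i, rfl⟩
    exact Module.End.pow_apply_mem_of_forall_mem i hDF c hc
  have hrel : Ψ.restrict hΨF * (1 + W.restrict hWF) = W.restrict hWF * Ψ.restrict hΨF := by
    ext ⟨z, hz⟩
    simpa using h z hz
  have hD : 1 - Ψ.restrict hΨF = D.restrict hDF := by
    ext
    simp [D]
  obtain ⟨z, hz⟩ := aeval_apply_mem_range_one_sub_of_pow_apply_eq_zero hrel (x := ⟨n, hnF⟩)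
    (by rw [hD, Module.End.pow_restrict]; exact Subtype.ext hm) 1
  have hn : n ∈ LinearMap.range D := ⟨z, by simpa [hD] using congrArg Subtype.val hz⟩
  simpa using Submodule.add_mem _ hr hn

end

section

variable {K A : Type*} [Field K] [CharZero K] [NonUnitalRing A] [Module K A]

theorem IsIdempotentElem.mul_mem_range_one_sub_left [SMulCommClass K A A] {e : A}
    (he : IsIdempotentElem e) {φ : A →ₙₐ[K] A} (hφe : φ e = e) {w : A} (hφw : φ w = w - e)
    (hew : e * w = w) (a : A)
    (hfd : FiniteDimensional K (Submodule.span K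
      (Set.range fun i : ℕ => ((1 - (φ : A →ₗ[K] A)) ^ i) (e * a)))) :
    e * a ∈ LinearMap.range (1 - (φ : A →ₗ[K] A)) := by
  have hφF : ∀ z, e * z = z → e * φ z = φ z := fun z hz => by rw [← hφe, ← map_mul, hz]
  refine mem_range_one_sub_of_finiteDimensional_span
    (F := LinearMap.eqLocus (LinearMap.mulLeft K e) LinearMap.id) (W := LinearMap.mulLeft K w)
    ?_ ?_ ?_ ?_ hfd <;>
    simp only [LinearMap.mem_eqLocus, LinearMap.mulLeft_apply, LinearMap.id_apply]
  · exact hφF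
  · intro z _
    rw [← mul_assoc, hew]
  · intro z hz
    simp [map_mul, hφw, sub_mul, hφF z hz]
  · rw [← mul_assoc, he.eq]

theorem IsIdempotentElem.mul_mem_range_one_sub_right [IsScalarTower K A A] {e : A}
    (he : IsIdempotentElem e) {φ : A →ₙₐ[K] A} (hφe : φ e = e) {w : A} (hφw : φ w = w - e)
    (hwe : w * e = w) (a : A)
    (hfd : FiniteDimensional K (Submodule.span K
      (Set.range fun i : ℕ => ((1 - (φ : A →ₗ[K] A)) ^ i) (a * e)))) :
    a * e ∈ LinearMap.range (1 - (φ : A →ₗ[K] A)) := by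
  have hφF : ∀ z, z * e = z → φ z * e = φ z := fun z hz => by rw [← hφe, ← map_mul, hz]
  refine mem_range_one_sub_of_finiteDimensional_span
    (F := LinearMap.eqLocus (LinearMap.mulRight K e) LinearMap.id) (W := LinearMap.mulRight K w)
    ?_ ?_ ?_ ?_ hfd <;>
    simp only [LinearMap.mem_eqLocus, LinearMap.mulRight_apply, LinearMap.id_apply]
  · exact hφF
  · intro z _
    rw [mul_assoc, hwe]
  · intro z hz
    simp [map_mul, hφw, mul_sub, hφF z hz]
  · rw [mul_assoc, he.eq]

end

/-- Let `K` be a field of characteristic zero, `A` a `K`-algebra (not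
necessarily unital or commutative), and `δ` a locally finite `K`-`E`-derivation of `A`
(i.e. `δ = Id - φ` for some `K`-algebra endomorphism `φ` of `A`).  If `e` is an idempotent
of `A` lying in both the kernel and the image of `δ`, then both `eA` and `Ae` are
contained in the image of `δ`. -/
theorem image_of_locally_finite_Ederivation_contains_eA_and_Ae
    {K : Type*} [Field K] [CharZero K]
    {A : Type*} [NonUnitalRing A] [Module K A] [SMulCommClass K A A] [IsScalarTower K A A]
    (δ : A →ₗ[K] A)
    (hEder : ∃ φ : A →ₙₐ[K] A, ∀ a : A, δ a = a - φ a)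
    (hLF : ∀ a : A,
      FiniteDimensional K (Submodule.span K (Set.range fun i : ℕ => (δ ^ i) a)))
    (e : A) (hidem : e * e = e) (hker : δ e = 0) (him : e ∈ LinearMap.range δ) :
    ∀ a : A, e * a ∈ LinearMap.range δ ∧ a * e ∈ LinearMap.range δ := by
  obtain ⟨φ, hφ⟩ := hEder
  obtain ⟨b, hb⟩ := him
  have hδ : δ = 1 - (φ : A →ₗ[K] A) := LinearMap.ext fun a => by simp [hφ]
  have hφe : φ e = e := (sub_eq_zero.mp ((hφ e).symm.trans hker)).symm
  have hφb : φ b = b - e := by rw [← hb, hφ, sub_sub_cancel]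
  have hφw : φ (e * b * e) = e * b * e - e := by
    rw [map_mul, map_mul, hφe, hφb, mul_sub, sub_mul, hidem, hidem]
  have hew : e * (e * b * e) = e * b * e := by rw [← mul_assoc, ← mul_assoc, hidem]
  have hwe : e * b * e * e = e * b * e := by rw [mul_assoc, hidem]
  rw [hδ] at hLF ⊢
  exact fun a => ⟨IsIdempotentElem.mul_mem_range_one_sub_left hidem hφe hφw hew a (hLF _),
    IsIdempotentElem.mul_mem_range_one_sub_right hidem hφe hφw hwe a (hLF _)⟩
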